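/- arXiv:1807.01072 — 6 statements merged into one kernel-verified Lean document; each statement's English description precedes it below -/
import Mathlib

section
/- Let d : (0,2) → ℝ satisfy d(γ) ≥ 2 for all γ ∈ (0,2), and assume: (i) γ ↦ γ/d(γ) is nondecreasing on (0,2); (ii) γ ↦ 1 − 2/d(γ) − γ²/(2·d(γ)) + γ²/(2·d(γ)²) is nondecreasing on (0,2); (iii) d(√(8/3)) = 4; (iv) for all γ ∈ (0,2), 2γ²/(4 + γ² − √(16 + γ⁴)) ≤ d(γ) ≤ 2 + γ²/2 + √2·γ. Then for every γ ∈ (0,2): if γ ≤ √(8/3), then max{√6·γ, 2γ²/(4 + γ² − √(16 + γ⁴))} ≤ d(γ) ≤ min{(4 + γ² + √(16 + 2γ² + γ⁴))/3, 2 + γ²/2 + √2·γ}; and if γ ≥ √(8/3), then (4 + γ² + √(16 + 2γ² + γ⁴))/3 ≤ d(γ) ≤ √6·γ. -/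
set_option maxHeartbeats 1600000 in
/-- The deterministic core of Theorem 1.2: monotonicity of `γ/d(γ)` and of the LFPP
distance exponent, the value `d(√(8/3)) = 4`, and the previously known bounds imply the
explicit piecewise upper and lower bounds for the LQG dimension `d(γ)`. -/
theorem lqg_dimension_bounds (d : ℝ → ℝ)
    (hd2 : ∀ γ ∈ Set.Ioo (0:ℝ) 2, 2 ≤ d γ)
    (hmono1 : ∀ γ₁ ∈ Set.Ioo (0:ℝ) 2, ∀ γ₂ ∈ Set.Ioo (0:ℝ) 2, γ₁ ≤ γ₂ →
      γ₁ / d γ₁ ≤ γ₂ / d γ₂)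
    (hmono2 : ∀ γ₁ ∈ Set.Ioo (0:ℝ) 2, ∀ γ₂ ∈ Set.Ioo (0:ℝ) 2, γ₁ ≤ γ₂ →
      1 - 2 / d γ₁ - γ₁ ^ 2 / (2 * d γ₁) + γ₁ ^ 2 / (2 * (d γ₁) ^ 2) ≤
        1 - 2 / d γ₂ - γ₂ ^ 2 / (2 * d γ₂) + γ₂ ^ 2 / (2 * (d γ₂) ^ 2))
    (h83 : d (Real.sqrt (8 / 3)) = 4)
    (hknown : ∀ γ ∈ Set.Ioo (0:ℝ) 2,
      2 * γ ^ 2 / (4 + γ ^ 2 - Real.sqrt (16 + γ ^ 4)) ≤ d γ ∧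
        d γ ≤ 2 + γ ^ 2 / 2 + Real.sqrt 2 * γ) :
    ∀ γ ∈ Set.Ioo (0:ℝ) 2,
      (γ ≤ Real.sqrt (8 / 3) →
        max (Real.sqrt 6 * γ) (2 * γ ^ 2 / (4 + γ ^ 2 - Real.sqrt (16 + γ ^ 4))) ≤ d γ ∧
          d γ ≤ min ((4 + γ ^ 2 + Real.sqrt (16 + 2 * γ ^ 2 + γ ^ 4)) / 3)
            (2 + γ ^ 2 / 2 + Real.sqrt 2 * γ)) ∧
      (Real.sqrt (8 / 3) ≤ γ →
        (4 + γ ^ 2 + Real.sqrt (16 + 2 * γ ^ 2 + γ ^ 4)) / 3 ≤ d γ ∧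
          d γ ≤ Real.sqrt 6 * γ) := by
  intro γ hγ
  set s := Real.sqrt (8/3) with hs
  have hs0 : (0:ℝ) < s := Real.sqrt_pos.mpr (by norm_num)
  have hs2 : s ^ 2 = 8/3 := Real.sq_sqrt (by norm_num)
  have hslt : s < 2 := by nlinarith
  have hsmem : s ∈ Set.Ioo (0:ℝ) 2 := ⟨hs0, hslt⟩
  have h6 : (0:ℝ) ≤ 6 := by norm_num
  have h6s : Real.sqrt 6 * s = 4 := by
    rw [hs, ← Real.sqrt_mul h6]
    rw [show (6:ℝ) * (8/3) = 4^2 by norm_num, Real.sqrt_sq (by norm_num)]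
  have h6nn : (0:ℝ) ≤ Real.sqrt 6 := Real.sqrt_nonneg 6
  have hγ0 := hγ.1
  have hdγ : 2 ≤ d γ := hd2 γ hγ
  have hdγ0 : 0 < d γ := by linarith
  -- the sqrt in the quadratic bound
  set r := Real.sqrt (16 + 2 * γ ^ 2 + γ ^ 4) with hr
  have hr0 : 0 ≤ r := Real.sqrt_nonneg _
  have hr2 : r ^ 2 = 16 + 2 * γ ^ 2 + γ ^ 4 := Real.sq_sqrt (by positivity)
  constructor
  · intro hle
    have hk := hknown γ hγ
    constructor
    · refine max_le ?_ hk.1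
      -- √6 γ ≤ d γ
      have h1 := hmono1 γ hγ s hsmem hle
      rw [h83] at h1
      have h2 : γ * 4 ≤ s * d γ := by
        rw [div_le_div_iff₀ hdγ0 (by norm_num)] at h1
        linarith
      have h3 : Real.sqrt 6 * (γ * 4) ≤ Real.sqrt 6 * (s * d γ) :=
        mul_le_mul_of_nonneg_left h2 h6nn
      nlinarith [h3]
    · refine le_min ?_ hk.2
      have h1 := hmono2 γ hγ s hsmem hle
      rw [h83] at h1
      have h14 : 1 - 2 / d γ - γ ^ 2 / (2 * d γ) + γ ^ 2 / (2 * (d γ) ^ 2) ≤ 1/4 := by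
        have : 1 - 2 / (4:ℝ) - s ^ 2 / (2 * 4) + s ^ 2 / (2 * 4 ^ 2) = 1/4 := by
          rw [hs2]; norm_num
        linarith
      have hq : 3 * (d γ) ^ 2 - (8 + 2 * γ ^ 2) * d γ + 2 * γ ^ 2 ≤ 0 := by
        have hkey : (1 - 2 / d γ - γ ^ 2 / (2 * d γ) + γ ^ 2 / (2 * (d γ) ^ 2)) * (4 * (d γ)^2)
            = 4 * (d γ)^2 - 8 * d γ - 2 * γ^2 * d γ + 2 * γ^2 := by
          field_simp
          ring
        nlinarith [mul_le_mul_of_nonneg_right h14 (by positivity : (0:ℝ) ≤ 4 * (d γ)^2), hkey]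
      nlinarith [hq, hr0, hr2, sq_nonneg (3 * d γ - (4 + γ^2) - r), sq_nonneg (3 * d γ - (4 + γ^2) + r)]
  · intro hge
    constructor
    · have h1 := hmono2 s hsmem γ hγ hge
      rw [h83] at h1
      have h14 : 1/4 ≤ 1 - 2 / d γ - γ ^ 2 / (2 * d γ) + γ ^ 2 / (2 * (d γ) ^ 2) := by
        have : 1 - 2 / (4:ℝ) - s ^ 2 / (2 * 4) + s ^ 2 / (2 * 4 ^ 2) = 1/4 := by
          rw [hs2]; norm_num
        linarith
      have hq : 0 ≤ 3 * (d γ) ^ 2 - (8 + 2 * γ ^ 2) * d γ + 2 * γ ^ 2 := by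
        have hkey : (1 - 2 / d γ - γ ^ 2 / (2 * d γ) + γ ^ 2 / (2 * (d γ) ^ 2)) * (4 * (d γ)^2)
            = 4 * (d γ)^2 - 8 * d γ - 2 * γ^2 * d γ + 2 * γ^2 := by
          field_simp
          ring
        nlinarith [mul_le_mul_of_nonneg_right h14 (by positivity : (0:ℝ) ≤ 4 * (d γ)^2), hkey]
      -- lower root < 2 ≤ d γ, so d γ ≥ upper root
      have hγ4 : γ ^ 2 < 4 := by nlinarith [hγ.2, hγ0]
      have h4r : 4 ≤ r := by nlinarith [hr0, hr2, sq_nonneg γ, sq_nonneg (γ ^ 2)]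
      have ht : 0 < 3 * d γ - (4 + γ ^ 2) + r := by linarith
      nlinarith [hq, hr2, ht]
    · have h1 := hmono1 s hsmem γ hγ hge
      rw [h83] at h1
      have h2 : s * d γ ≤ γ * 4 := by
        rw [div_le_div_iff₀ (by norm_num) hdγ0] at h1
        linarith
      have h3 : Real.sqrt 6 * (s * d γ) ≤ Real.sqrt 6 * (γ * 4) :=
        mul_le_mul_of_nonneg_left h2 h6nn
      rw [← mul_assoc, h6s, show Real.sqrt 6 * (γ * 4) = (Real.sqrt 6 * γ) * 4 by ring] at h3
      linarith
end

section
/- Let d : (0,2) → ℝ satisfy d(γ) ≥ 2 for all γ ∈ (0,2), and suppose that for all γ₁, γ₂ ∈ (0,2): if γ₁/d(γ₁) ≤ γ₂/d(γ₂), then 1 − 2/d(γ₁) − γ₁²/(2·d(γ₁)) + γ₁²/(2·d(γ₁)²) ≤ 1 − 2/d(γ₂) − γ₂²/(2·d(γ₂)) + γ₂²/(2·d(γ₂)²). Then d is strictly increasing on (0,2): for all 0 < γ₁ < γ₂ < 2, d(γ₁) < d(γ₂). -/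
/-- Proposition 2.2 in abstract form: if `d ≥ 2` on `(0,2)` and the implication (2.19)
relating the LFPP parameter `γ/d(γ)` to the LFPP distance exponent holds, then `d` is
strictly increasing on `(0,2)`. -/
theorem lqg_dimension_strictMono (d : ℝ → ℝ)
    (hd2 : ∀ γ ∈ Set.Ioo (0:ℝ) 2, 2 ≤ d γ)
    (himp : ∀ γ₁ ∈ Set.Ioo (0:ℝ) 2, ∀ γ₂ ∈ Set.Ioo (0:ℝ) 2,
      γ₁ / d γ₁ ≤ γ₂ / d γ₂ →
      1 - 2 / d γ₁ - γ₁ ^ 2 / (2 * d γ₁) + γ₁ ^ 2 / (2 * (d γ₁) ^ 2) ≤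
        1 - 2 / d γ₂ - γ₂ ^ 2 / (2 * d γ₂) + γ₂ ^ 2 / (2 * (d γ₂) ^ 2)) :
    ∀ γ₁ γ₂ : ℝ, 0 < γ₁ → γ₁ < γ₂ → γ₂ < 2 → d γ₁ < d γ₂ := by
  intro γ₁ γ₂ h1 h12 h22
  by_contra hcon
  push_neg at hcon
  have hγ₁ : γ₁ ∈ Set.Ioo (0:ℝ) 2 := ⟨h1, h12.trans h22⟩
  have hγ₂ : γ₂ ∈ Set.Ioo (0:ℝ) 2 := ⟨h1.trans h12, h22⟩
  have ha2 := hd2 γ₁ hγ₁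
  have hb2 := hd2 γ₂ hγ₂
  set a := d γ₁ with hA
  set b := d γ₂ with hB
  have hA0 : (0:ℝ) < a := by linarith
  have hB0 : (0:ℝ) < b := by linarith
  have hratio : γ₁ / a ≤ γ₂ / b := by
    rw [div_le_div_iff₀ hA0 hB0]
    nlinarith
  have key := himp γ₁ hγ₁ γ₂ hγ₂ hratio
  rw [← hA, ← hB] at key
  have hAne : a ≠ 0 := ne_of_gt hA0
  have hBne : b ≠ 0 := ne_of_gt hB0
  have hpos : (0:ℝ) ≤ 2*a^2*b^2 := by positivity
  have key2 := mul_le_mul_of_nonneg_left key hpos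
  have e1 : (2*a^2*b^2) * (1 - 2/a - γ₁^2/(2*a) + γ₁^2/(2*a^2)) =
      (2*a^2 - 4*a - γ₁^2*a + γ₁^2) * b^2 := by field_simp; ring
  have e2 : (2*a^2*b^2) * (1 - 2/b - γ₂^2/(2*b) + γ₂^2/(2*b^2)) =
      (2*b^2 - 4*b - γ₂^2*b + γ₂^2) * a^2 := by field_simp; ring
  rw [e1, e2] at key2
  nlinarith [key2,
    mul_nonneg (mul_nonneg (mul_nonneg (sub_nonneg.2 hcon) hA0.le) hB0.le) (by norm_num : (0:ℝ) ≤ 4),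
    mul_nonneg (mul_nonneg (sq_nonneg γ₂) (sub_nonneg.2 hcon)) (by nlinarith : (0:ℝ) ≤ a*b - a - b),
    mul_pos (mul_pos (by nlinarith : (0:ℝ) < γ₂^2 - γ₁^2) (by linarith : (0:ℝ) < a - 1)) (by positivity : (0:ℝ) < b^2)]
end

section
/- Let d : (0,2) → ℝ satisfy d(γ) ≥ 2 for all γ ∈ (0,2). Assume: (i) for all γ₁, γ₂ ∈ (0,2), if γ₁/d(γ₁) ≤ γ₂/d(γ₂), then 1 − 2/d(γ₁) − γ₁²/(2·d(γ₁)) + γ₁²/(2·d(γ₁)²) ≤ 1 − 2/d(γ₂) − γ₂²/(2·d(γ₂)) + γ₂²/(2·d(γ₂)²); (ii) for all γ₁, γ₂ ∈ (0,2), if γ₁/d(γ₁) = γ₂/d(γ₂), then 1 − 2/d(γ₁) − γ₁²/(2·d(γ₁)) = 1 − 2/d(γ₂) − γ₂²/(2·d(γ₂)). Then the function γ ↦ γ/d(γ) is strictly increasing on (0,2), and the function γ ↦ 1 − 2/d(γ) − γ²/(2·d(γ)) + γ²/(2·d(γ)²) is nondecreasing on (0,2). -/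
/-!
Write `ξ = γ / d(γ)` and `Q(γ) = 2/γ + γ/2`. Then the two exponents of the statement are
`1 - ξ Q` and `1 - ξ Q + ξ²/2`. On `(0,2)` we have `ξ < 1`, while `Q ≥ 2` is strictly
decreasing. If `a < b` had `ξ(a) = ξ(b)`, hypothesis (ii) would force `Q(a) = Q(b)`. If
`ξ(b) < ξ(a)`, then `ξ Q - ξ²/2` increasing in both `ξ` (as `ξ < Q`) and `Q` makes the
exponent at `a` strictly smaller than at `b`, contradicting (i). Monotonicity of the
exponent then follows from (i).
-/

open Set

noncomputable def lqgQ (γ : ℝ) : ℝ := 2 / γ + γ / 2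

lemma two_le_lqgQ {γ : ℝ} (hγ : 0 < γ) : 2 ≤ lqgQ γ := by
  have : lqgQ γ - 2 = (γ - 2) ^ 2 / (2 * γ) := by
    unfold lqgQ; field_simp; ring
  have : 0 ≤ (γ - 2) ^ 2 / (2 * γ) := by positivity
  linarith

lemma lqgQ_strictAntiOn : StrictAntiOn lqgQ (Ioc 0 2) := by
  rintro a ⟨ha, -⟩ b ⟨hb, hb2⟩ hab
  have hdiff : lqgQ a - lqgQ b = (b - a) * (4 - a * b) / (2 * a * b) := by
    unfold lqgQ; field_simp; ring
  have : 0 < (b - a) * (4 - a * b) / (2 * a * b) := by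
    apply div_pos (mul_pos (by linarith) (by nlinarith)) (by positivity)
  linarith

lemma one_sub_two_div_sub_sq_div_eq {γ d : ℝ} (hγ : γ ≠ 0) :
    1 - 2 / d - γ ^ 2 / (2 * d) = 1 - γ / d * lqgQ γ := by
  unfold lqgQ; field_simp; ring

lemma one_sub_two_div_sub_sq_div_add_sq_div_eq {γ d : ℝ} (hγ : γ ≠ 0) :
    1 - 2 / d - γ ^ 2 / (2 * d) + γ ^ 2 / (2 * d ^ 2) =
      1 - γ / d * lqgQ γ + (γ / d) ^ 2 / 2 := by
  rw [one_sub_two_div_sub_sq_div_eq hγ, div_pow]; ring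

lemma one_sub_mul_add_sq_half_lt {s t u v : ℝ} (hs : 0 < s) (hts : t < s) (hst : s + t < 2)
    (hu : 2 ≤ u) (huv : u < v) :
    1 - s * v + s ^ 2 / 2 < 1 - t * u + t ^ 2 / 2 := by
  have hQ : s * u < s * v := mul_lt_mul_of_pos_left huv hs
  have hξ : (s - t) * (s + t) < (s - t) * (2 * u) :=
    mul_lt_mul_of_pos_left (by linarith) (by linarith)
  nlinarith

/-- Proposition 1.6 in abstract form: under the consequences (i), (ii) of the LFPP
exponent relation, the function `γ ↦ γ/d(γ)` is strictly increasing on `(0,2)` and the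
LFPP distance exponent `γ ↦ 1 - 2/d(γ) - γ²/(2d(γ)) + γ²/(2d(γ)²)` is nondecreasing. -/
theorem lqg_exponents_monotone (d : ℝ → ℝ)
    (hd2 : ∀ γ ∈ Set.Ioo (0:ℝ) 2, 2 ≤ d γ)
    (himp : ∀ γ₁ ∈ Set.Ioo (0:ℝ) 2, ∀ γ₂ ∈ Set.Ioo (0:ℝ) 2,
      γ₁ / d γ₁ ≤ γ₂ / d γ₂ →
      1 - 2 / d γ₁ - γ₁ ^ 2 / (2 * d γ₁) + γ₁ ^ 2 / (2 * (d γ₁) ^ 2) ≤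
        1 - 2 / d γ₂ - γ₂ ^ 2 / (2 * d γ₂) + γ₂ ^ 2 / (2 * (d γ₂) ^ 2))
    (heq : ∀ γ₁ ∈ Set.Ioo (0:ℝ) 2, ∀ γ₂ ∈ Set.Ioo (0:ℝ) 2,
      γ₁ / d γ₁ = γ₂ / d γ₂ →
      1 - 2 / d γ₁ - γ₁ ^ 2 / (2 * d γ₁) = 1 - 2 / d γ₂ - γ₂ ^ 2 / (2 * d γ₂)) :
    StrictMonoOn (fun γ => γ / d γ) (Set.Ioo 0 2) ∧
      MonotoneOn (fun γ => 1 - 2 / d γ - γ ^ 2 / (2 * d γ) + γ ^ 2 / (2 * (d γ) ^ 2))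
        (Set.Ioo 0 2) := by
  have hξ : ∀ γ ∈ Ioo (0:ℝ) 2, 0 < γ / d γ ∧ γ / d γ < 1 := fun γ hγ =>
    have hd : 0 < d γ := by linarith [hd2 γ hγ]
    ⟨div_pos hγ.1 hd, (div_lt_one hd).2 (by linarith [hγ.2, hd2 γ hγ])⟩
  have hQ : ∀ {a b}, a ∈ Ioo (0:ℝ) 2 → b ∈ Ioo (0:ℝ) 2 → a < b → lqgQ b < lqgQ a :=
    fun ha hb => lqgQ_strictAntiOn (Ioo_subset_Ioc_self ha) (Ioo_subset_Ioc_self hb)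
  have hsm : StrictMonoOn (fun γ => γ / d γ) (Ioo 0 2) := by
    intro a ha b hb hab
    by_contra! hba
    rcases hba.lt_or_eq with hlt | hξeq
    · have := himp b hb a ha hlt.le
      rw [one_sub_two_div_sub_sq_div_add_sq_div_eq hb.1.ne',
        one_sub_two_div_sub_sq_div_add_sq_div_eq ha.1.ne'] at this
      exact this.not_gt <| one_sub_mul_add_sq_half_lt (hξ a ha).1 hlt
        (by linarith [(hξ a ha).2, (hξ b hb).2]) (two_le_lqgQ hb.1) (hQ ha hb hab)
    · have := heq b hb a ha hξeq
      rw [one_sub_two_div_sub_sq_div_eq hb.1.ne', one_sub_two_div_sub_sq_div_eq ha.1.ne',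
        hξeq] at this
      have := mul_left_cancel₀ (hξ a ha).1.ne' (sub_right_injective this)
      exact (hQ ha hb hab).ne this
  exact ⟨hsm, fun a ha b hb hab => himp a ha b hb (hsm.monotoneOn ha hb hab)⟩
end

section
/- Let f : [0,1] → [0,∞) be an injective function such that f(0) = 0 and f has no upward jumps, i.e., liminf_{y→x⁻} f(y) ≥ f(x) and limsup_{y→x⁺} f(y) ≤ f(x) for each x ∈ [0,1]. Then f is continuous and strictly increasing on [0,1]. -/
open Filter Set

/-- Upward intermediate value property for functions with no upward jumps. -/
lemma ivp_of_no_upward_jumps (f : ℝ → ℝ)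
    (hjump : ∀ x ∈ Set.Icc (0:ℝ) 1,
      ((f x : ℝ) : EReal) ≤
        Filter.liminf (fun y : ℝ => ((f y : ℝ) : EReal))
          (nhdsWithin x (Set.Icc 0 1 ∩ Set.Iio x)) ∧
      Filter.limsup (fun y : ℝ => ((f y : ℝ) : EReal))
          (nhdsWithin x (Set.Icc 0 1 ∩ Set.Ioi x)) ≤ ((f x : ℝ) : EReal))
    {a b c : ℝ} (ha : a ∈ Set.Icc (0:ℝ) 1) (hb : b ∈ Set.Icc (0:ℝ) 1) (hab : a < b)
    (hca : f a < c) (hcb : c ≤ f b) : ∃ s ∈ Set.Ioc a b, f s = c := by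
  set S : Set ℝ := {x | x ∈ Set.Icc a b ∧ c ≤ f x} with hS
  have hbS : b ∈ S := ⟨⟨hab.le, le_rfl⟩, hcb⟩
  have hSne : S.Nonempty := ⟨b, hbS⟩
  have hSbdd : BddBelow S := ⟨a, fun x hx => hx.1.1⟩
  set s := sInf S with hs
  have hsa : a ≤ s := le_csInf hSne fun x hx => hx.1.1
  have hsb : s ≤ b := csInf_le hSbdd hbS
  have hsI : s ∈ Set.Icc (0:ℝ) 1 := ⟨le_trans ha.1 hsa, le_trans hsb hb.2⟩
  -- every point of S other than s itself accumulates from the right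
  have key : c ≤ f s := by
    by_cases hsS : s ∈ S
    · exact hsS.2
    · -- frequently, points of S to the right of s
      have hfreq : ∃ᶠ y in nhdsWithin s (Set.Icc 0 1 ∩ Set.Ioi s),
          (c : EReal) ≤ (f y : EReal) := by
        rw [Filter.frequently_iff]
        intro U hU
        rcases mem_nhdsWithin.1 hU with ⟨V, hVopen, hsV, hVU⟩
        rcases Metric.isOpen_iff.1 hVopen s hsV with ⟨ε, hε, hball⟩
        rcases (csInf_lt_iff hSbdd hSne).1 (show sInf S < s + ε by
          rw [← hs]; linarith) with ⟨y, hyS, hy⟩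
        have hys : s ≤ y := csInf_le hSbdd hyS
        have hys' : s < y := lt_of_le_of_ne hys (by rintro rfl; exact hsS hyS)
        refine ⟨y, hVU ⟨hball ?_, ⟨⟨le_trans ha.1 (le_trans hsa hys), le_trans hyS.1.2 hb.2⟩, hys'⟩⟩, ?_⟩
        · simp [Real.dist_eq, abs_lt]; constructor <;> linarith
        · exact_mod_cast hyS.2
      have := Filter.le_limsup_of_frequently_le' hfreq
      have h2 := (hjump s hsI).2
      exact_mod_cast le_trans this h2
  have hsa' : a < s := by
    rcases lt_or_eq_of_le hsa with h | h
    · exact h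
    · exfalso; rw [← h] at key; exact absurd key (not_le.2 hca)
  -- from the left, values are < c, so liminf ≤ c, hence f s ≤ c
  have key2 : f s ≤ c := by
    have hev : ∀ᶠ y in nhdsWithin s (Set.Icc 0 1 ∩ Set.Iio s),
        (fun y : ℝ => ((f y : ℝ) : EReal)) y ≤ (c : EReal) := by
      filter_upwards [self_mem_nhdsWithin,
        eventually_nhdsWithin_of_eventually_nhds (eventually_gt_nhds hsa')] with y hy hya
      have hyS : y ∉ S := fun h => absurd (csInf_le hSbdd h) (not_le.2 hy.2)
      have : f y < c := by
        by_contra h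
        exact hyS ⟨⟨hya.le, le_trans hy.2.le hsb⟩, not_lt.1 h⟩
      exact_mod_cast this.le
    have hNe : (nhdsWithin s (Set.Icc 0 1 ∩ Set.Iio s)).NeBot := by
      have h1 : s ∈ closure (Set.Ioo a s) := by
        rw [closure_Ioo (ne_of_lt hsa')]; exact ⟨hsa'.le, le_rfl⟩
      have h2 : Set.Ioo a s ⊆ Set.Icc 0 1 ∩ Set.Iio s := fun y hy =>
        ⟨⟨le_trans ha.1 hy.1.le, le_trans hy.2.le (le_trans hsb hb.2)⟩, hy.2⟩
      exact (mem_closure_iff_nhdsWithin_neBot.1 h1).mono (nhdsWithin_mono s h2)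
    have hlb := (hjump s hsI).1
    have := Filter.liminf_le_of_frequently_le' hev.frequently
    exact_mod_cast le_trans hlb this
  exact ⟨s, ⟨hsa', hsb⟩, le_antisymm key2 key⟩

/-- Lemma 2.4: an injective function `f : [0,1] → [0,∞)` with `f(0) = 0` and no upward
jumps (left liminf `≥ f(x)` and right limsup `≤ f(x)` at every point, one-sided limits
taken within `[0,1]`) is continuous and strictly increasing on `[0,1]`. -/
theorem continuous_strictMono_of_no_upward_jumps (f : ℝ → ℝ)
    (hnonneg : ∀ x ∈ Set.Icc (0:ℝ) 1, 0 ≤ f x)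
    (hinj : Set.InjOn f (Set.Icc 0 1))
    (hf0 : f 0 = 0)
    (hjump : ∀ x ∈ Set.Icc (0:ℝ) 1,
      ((f x : ℝ) : EReal) ≤
        Filter.liminf (fun y : ℝ => ((f y : ℝ) : EReal))
          (nhdsWithin x (Set.Icc 0 1 ∩ Set.Iio x)) ∧
      Filter.limsup (fun y : ℝ => ((f y : ℝ) : EReal))
          (nhdsWithin x (Set.Icc 0 1 ∩ Set.Ioi x)) ≤ ((f x : ℝ) : EReal)) :
    ContinuousOn f (Set.Icc 0 1) ∧ StrictMonoOn f (Set.Icc 0 1) := by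
  have h01 : (0:ℝ) ∈ Set.Icc (0:ℝ) 1 := ⟨le_rfl, zero_le_one⟩
  have hmono : StrictMonoOn f (Set.Icc 0 1) := by
    intro a haI b hbI hab
    by_contra hle
    push_neg at hle
    have hne : f b ≠ f a := fun h => absurd (hinj hbI haI h) (ne_of_gt hab)
    have hba : f b < f a := lt_of_le_of_ne hle hne
    have hb0 : 0 < f b := by
      rcases lt_or_eq_of_le (hnonneg b hbI) with h | h
      · exact h
      · exfalso
        have hb0' : b = 0 := hinj hbI h01 (by rw [← h, hf0])
        have hbpos : (0:ℝ) < b := lt_of_le_of_lt haI.1 hab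
        linarith
    have ha0 : 0 < a := by
      by_contra h
      push_neg at h
      have : a = 0 := le_antisymm h haI.1
      rw [this, hf0] at hba
      linarith
    obtain ⟨s, hsmem, hsval⟩ := ivp_of_no_upward_jumps f hjump h01 haI ha0
      (by rw [hf0]; exact hb0) hba.le
    have hsb' : s = b := hinj ⟨hsmem.1.le, le_trans hsmem.2 haI.2⟩ hbI hsval
    rw [hsb'] at hsmem
    linarith [hsmem.2]
  refine ⟨?_, hmono⟩
  intro x hxI
  have hsplit : Set.Icc (0:ℝ) 1 ⊆ (Set.Icc 0 1 ∩ Set.Iio x) ∪ ({x} ∪ (Set.Icc 0 1 ∩ Set.Ioi x)) := by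
    intro y hy
    rcases lt_trichotomy y x with h | h | h
    · exact Or.inl ⟨hy, h⟩
    · exact Or.inr (Or.inl h)
    · exact Or.inr (Or.inr ⟨hy, h⟩)
  have hcont : Tendsto f (nhdsWithin x ((Set.Icc 0 1 ∩ Set.Iio x) ∪ ({x} ∪ (Set.Icc 0 1 ∩ Set.Ioi x)))) (nhds (f x)) := by
    rw [nhdsWithin_union, nhdsWithin_union]
    refine Filter.tendsto_sup.2 ⟨?_, Filter.tendsto_sup.2 ⟨?_, ?_⟩⟩
    · -- left
      rw [← EReal.tendsto_coe]
      refine tendsto_of_le_liminf_of_limsup_le (hjump x hxI).1 ?_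
      refine Filter.limsup_le_of_le (by isBoundedDefault) ?_
      filter_upwards [self_mem_nhdsWithin] with y hy
      exact_mod_cast (hmono hy.1 hxI hy.2).le
    · rw [nhdsWithin_singleton]
      exact tendsto_pure_nhds f x
    · -- right
      rw [← EReal.tendsto_coe]
      refine tendsto_of_le_liminf_of_limsup_le ?_ (hjump x hxI).2
      refine Filter.le_liminf_of_le (by isBoundedDefault) ?_
      filter_upwards [self_mem_nhdsWithin] with y hy
      exact_mod_cast (hmono hxI hy.1 hy.2).le
  exact hcont.mono_left (nhdsWithin_mono x hsplit)
end

section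
/- Let f : [0,1] → [0,∞) satisfy f(0) = 0 and suppose f has no upward jumps, i.e., liminf_{y→x⁻} f(y) ≥ f(x) and limsup_{y→x⁺} f(y) ≤ f(x) for each x ∈ [0,1]. Then for every b ≥ 0 and every x₀ ∈ [0,1] with b ≤ f(x₀), there exists x* ∈ [0, x₀] with f(x*) = b. -/
/-- The intermediate-value claim from the proof of Lemma 2.4: if `f : [0,1] → [0,∞)`
satisfies `f(0) = 0` and has no upward jumps, then for every `b ≥ 0` and `x₀ ∈ [0,1]` with
`b ≤ f(x₀)` there is `x* ∈ [0, x₀]` with `f(x*) = b`. -/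
theorem exists_eq_of_no_upward_jumps (f : ℝ → ℝ)
    (hnonneg : ∀ x ∈ Set.Icc (0:ℝ) 1, 0 ≤ f x)
    (hf0 : f 0 = 0)
    (hjump : ∀ x ∈ Set.Icc (0:ℝ) 1,
      ((f x : ℝ) : EReal) ≤
        Filter.liminf (fun y : ℝ => ((f y : ℝ) : EReal))
          (nhdsWithin x (Set.Icc 0 1 ∩ Set.Iio x)) ∧
      Filter.limsup (fun y : ℝ => ((f y : ℝ) : EReal))
          (nhdsWithin x (Set.Icc 0 1 ∩ Set.Ioi x)) ≤ ((f x : ℝ) : EReal)) :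
    ∀ b : ℝ, 0 ≤ b → ∀ x₀ ∈ Set.Icc (0:ℝ) 1, b ≤ f x₀ →
      ∃ xstar ∈ Set.Icc 0 x₀, f xstar = b := by
  intro b hb x₀ hx₀ hbf
  set S : Set ℝ := {x | x ∈ Set.Icc (0:ℝ) x₀ ∧ f x ≤ b} with hSdef
  have h0S : (0:ℝ) ∈ S := ⟨⟨le_refl 0, hx₀.1⟩, by rw [hf0]; exact hb⟩
  have hSne : S.Nonempty := ⟨0, h0S⟩
  have hSbdd : BddAbove S := ⟨x₀, fun x hx => hx.1.2⟩
  set c := sSup S with hc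
  have hc0 : 0 ≤ c := le_csSup hSbdd h0S
  have hcx₀ : c ≤ x₀ := csSup_le hSne (fun x hx => hx.1.2)
  have hc1 : c ∈ Set.Icc (0:ℝ) 1 := ⟨hc0, hcx₀.trans hx₀.2⟩
  obtain ⟨hlim1, hlim2⟩ := hjump c hc1
  have hfcb : f c ≤ b := by
    by_contra h
    push_neg at h
    have hcS : c ∉ S := fun hcS => absurd hcS.2 (not_le.mpr h)
    have hcpos : 0 < c := lt_of_le_of_ne hc0 (fun e => hcS (e ▸ h0S))
    have hev : ∀ᶠ y in nhdsWithin c (Set.Icc 0 1 ∩ Set.Iio c), (b:EReal) < (f y : EReal) :=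
      Filter.eventually_lt_of_lt_liminf (lt_of_lt_of_le (by exact_mod_cast h) hlim1)
    have hfreq : ∃ᶠ y in nhdsWithin c (Set.Icc 0 1 ∩ Set.Iio c), ((f y : EReal) ≤ (b:EReal)) := by
      rw [Filter.frequently_iff]
      intro U hU
      rw [mem_nhdsWithin] at hU
      obtain ⟨u, hu, hcu, hsub⟩ := hU
      obtain ⟨ε, hε, hball⟩ := Metric.isOpen_iff.mp hu c hcu
      obtain ⟨s, hsS, hslt⟩ := exists_lt_of_lt_csSup hSne (by linarith : c - ε < c)
      have hsc : s < c := lt_of_le_of_ne (le_csSup hSbdd hsS) (fun e => hcS (e ▸ hsS))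
      refine ⟨s, hsub ⟨hball ?_, ⟨⟨hsS.1.1, hsS.1.2.trans hx₀.2⟩, hsc⟩⟩,
        by exact_mod_cast hsS.2⟩
      rw [Metric.mem_ball, Real.dist_eq, abs_lt]
      constructor <;> linarith
    obtain ⟨y, h1, h2⟩ := (hfreq.and_eventually hev).exists
    exact absurd h2 (not_lt.mpr h1)
  have hbfc : b ≤ f c := by
    by_contra h
    push_neg at h
    have hclt : c < x₀ :=
      lt_of_le_of_ne hcx₀ (fun e => absurd hbf (not_le.mpr (e ▸ h)))
    have hev : ∀ᶠ y in nhdsWithin c (Set.Icc 0 1 ∩ Set.Ioi c), (f y:EReal) < (b:EReal) :=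
      Filter.eventually_lt_of_limsup_lt (lt_of_le_of_lt hlim2 (by exact_mod_cast h))
    obtain ⟨u, hu, hcu, hsub⟩ := mem_nhdsWithin.mp hev
    obtain ⟨ε, hε, hball⟩ := Metric.isOpen_iff.mp hu c hcu
    set y := min (c + ε/2) ((c + x₀)/2) with hy
    have hyc : c < y := lt_min (by linarith) (by linarith)
    have hyx₀ : y < x₀ := lt_of_le_of_lt (min_le_right _ _) (by linarith)
    have hy1 : y ∈ Set.Icc (0:ℝ) 1 := ⟨by linarith, le_trans hyx₀.le hx₀.2⟩
    have hymem : y ∈ Metric.ball c ε := by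
      rw [Metric.mem_ball, Real.dist_eq, abs_lt]
      have : y ≤ c + ε/2 := min_le_left _ _
      constructor <;> linarith
    have hfy : (f y : EReal) < (b:EReal) := hsub ⟨hball hymem, hy1, hyc⟩
    have hyS : y ∈ S := ⟨⟨hy1.1, hyx₀.le⟩, by exact_mod_cast hfy.le⟩
    exact absurd (le_csSup hSbdd hyS) (not_le.mpr hyc)
  exact ⟨c, ⟨hc0, hcx₀⟩, le_antisymm hfcb hbfc⟩
end

section
/- Define d^Wat(γ) := 1 + γ²/4 + (1/4)·√((4 + γ²)² + 16γ²) for γ ∈ (0,2). Then for every γ ∈ (0,2): if γ ≤ √(8/3), then max{√6·γ, 2γ²/(4 + γ² − √(16 + γ⁴))} ≤ d^Wat(γ) ≤ min{(4 + γ² + √(16 + 2γ² + γ⁴))/3, 2 + γ²/2 + √2·γ}; and if γ ≥ √(8/3), then (4 + γ² + √(16 + 2γ² + γ⁴))/3 ≤ d^Wat(γ) ≤ √6·γ. -/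
set_option maxHeartbeats 1000000

private lemma le_of_sq_le_sq'' {a b : ℝ} (hb : 0 ≤ b) (h : a^2 ≤ b^2) : a ≤ b := by
  rcases le_or_gt a 0 with h0 | h0
  · linarith
  · nlinarith

noncomputable def dWatabiki (γ : ℝ) : ℝ :=
  1 + γ ^ 2 / 4 + (1 / 4) * Real.sqrt ((4 + γ ^ 2) ^ 2 + 16 * γ ^ 2)

/-- Watabiki's prediction lies between the lower bound and the upper bound of
Theorem 1.2 on all of `(0,2)`. -/
theorem dWatabiki_between_bounds :
    ∀ γ ∈ Set.Ioo (0:ℝ) 2,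
      (γ ≤ Real.sqrt (8 / 3) →
        max (Real.sqrt 6 * γ) (2 * γ ^ 2 / (4 + γ ^ 2 - Real.sqrt (16 + γ ^ 4))) ≤
            dWatabiki γ ∧
          dWatabiki γ ≤ min ((4 + γ ^ 2 + Real.sqrt (16 + 2 * γ ^ 2 + γ ^ 4)) / 3)
            (2 + γ ^ 2 / 2 + Real.sqrt 2 * γ)) ∧
      (Real.sqrt (8 / 3) ≤ γ →
        (4 + γ ^ 2 + Real.sqrt (16 + 2 * γ ^ 2 + γ ^ 4)) / 3 ≤ dWatabiki γ ∧
          dWatabiki γ ≤ Real.sqrt 6 * γ) := by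
  intro γ ⟨h0, h2⟩
  set S := Real.sqrt ((4 + γ ^ 2) ^ 2 + 16 * γ ^ 2) with hSdef
  have hS0 : 0 ≤ S := Real.sqrt_nonneg _
  have hS2 : S ^ 2 = (4 + γ ^ 2) ^ 2 + 16 * γ ^ 2 :=
    Real.sq_sqrt (by positivity)
  set U := Real.sqrt (16 + 2 * γ ^ 2 + γ ^ 4) with hUdef
  have hU0 : 0 ≤ U := Real.sqrt_nonneg _
  have hU2 : U ^ 2 = 16 + 2 * γ ^ 2 + γ ^ 4 :=
    Real.sq_sqrt (by positivity)
  set V := Real.sqrt (16 + γ ^ 4) with hVdef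
  have hV0 : 0 ≤ V := Real.sqrt_nonneg _
  have hV2 : V ^ 2 = 16 + γ ^ 4 := Real.sq_sqrt (by positivity)
  set s6 := Real.sqrt 6 with hs6def
  have hs60 : 0 ≤ s6 := Real.sqrt_nonneg _
  have hs62 : s6 ^ 2 = 6 := Real.sq_sqrt (by norm_num)
  set s2 := Real.sqrt 2 with hs2def
  have hs20 : 0 ≤ s2 := Real.sqrt_nonneg _
  have hs22 : s2 ^ 2 = 2 := Real.sq_sqrt (by norm_num)
  have ht4 : γ ^ 2 < 4 := by nlinarith
  have hW : dWatabiki γ = 1 + γ ^ 2 / 4 + (1/4) * S := rfl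
  have hVS : V ≤ S := Real.sqrt_le_sqrt (by nlinarith)
  clear_value S U V s6 s2
  clear hSdef hUdef hVdef hs6def hs2def
  -- the ratio lower bound equals (4 + γ² + V)/4
  have hVlt : V < 4 + γ ^ 2 := by
    have : V ^ 2 < (4 + γ ^ 2) ^ 2 := by nlinarith
    nlinarith
  have hratio : 2 * γ ^ 2 / (4 + γ ^ 2 - V) = (4 + γ ^ 2 + V) / 4 := by
    rw [div_eq_div_iff (by linarith) (by norm_num)]
    nlinarith
  constructor
  · intro hle
    have ht : γ ^ 2 ≤ 8/3 := by
      nlinarith [Real.sq_sqrt (show (0:ℝ) ≤ 8/3 by norm_num), pow_le_pow_left₀ h0.le hle 2]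
    constructor
    · apply max_le
      · -- √6 γ ≤ W :  4√6γ - 4 - γ² ≤ S
        have key : 10 * γ ≤ s6 * (4 + γ ^ 2) := by
          apply le_of_sq_le_sq'' (by positivity)
          have h1 : (0:ℝ) ≤ (8/3 - γ^2) * (6 - γ^2) :=
            mul_nonneg (by linarith) (by nlinarith)
          nlinarith [h1, hs62]
        have : 4 * (s6 * γ) - 4 - γ ^ 2 ≤ S := by
          apply le_of_sq_le_sq'' hS0
          nlinarith [mul_le_mul_of_nonneg_right key h0.le]
        rw [hW]; linarith
      · rw [hratio, hW]; linarith
    · apply le_min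
      · -- W ≤ (4 + γ² + U)/3  ⟺  3S ≤ 4 + γ² + 4U
        have key : -16 + 22 * γ ^ 2 - γ ^ 4 ≤ U * (4 + γ ^ 2) := by
          apply le_of_sq_le_sq'' (by positivity)
          nlinarith [hU2, mul_nonneg (mul_nonneg (sq_nonneg γ)
            (show (0:ℝ) ≤ 8/3 - γ^2 by linarith))
            (show (0:ℝ) ≤ 6 - γ^2 by nlinarith)]
        have : 3 * S ≤ 4 + γ ^ 2 + 4 * U := by
          apply le_of_sq_le_sq'' (by positivity)
          nlinarith
        rw [hW]; linarith
      · -- W ≤ 2 + γ²/2 + √2 γ  ⟺  S ≤ 4 + γ² + 4√2γ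
        have : S ≤ 4 + γ ^ 2 + 4 * (s2 * γ) := by
          apply le_of_sq_le_sq'' (by positivity)
          nlinarith [mul_nonneg hs20 h0.le, hS2, hs22, sq_nonneg γ,
            mul_nonneg (mul_nonneg hs20 h0.le) (sq_nonneg γ)]
        rw [hW]; linarith
  · intro hge
    have ht : 8/3 ≤ γ ^ 2 := by
      nlinarith [Real.sq_sqrt (show (0:ℝ) ≤ 8/3 by norm_num),
        pow_le_pow_left₀ (Real.sqrt_nonneg (8/3)) hge 2]
    constructor
    · -- (4 + γ² + U)/3 ≤ W  ⟺  4 + γ² + 4U ≤ 3S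
      have hpos : 0 ≤ -16 + 22 * γ ^ 2 - γ ^ 4 := by nlinarith
      have key : U * (4 + γ ^ 2) ≤ -16 + 22 * γ ^ 2 - γ ^ 4 := by
        apply le_of_sq_le_sq'' hpos
        nlinarith [hU2, mul_nonneg (mul_nonneg (sq_nonneg γ)
          (show (0:ℝ) ≤ γ^2 - 8/3 by linarith))
          (show (0:ℝ) ≤ 6 - γ^2 by nlinarith)]
      have : 4 + γ ^ 2 + 4 * U ≤ 3 * S := by
        apply le_of_sq_le_sq'' (by positivity)
        nlinarith
      rw [hW]; linarith
    · -- W ≤ √6 γ  ⟺  S ≤ 4√6γ - 4 - γ²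
      have hs6γ : 4 ≤ s6 * γ := by
        apply le_of_sq_le_sq'' (by positivity)
        nlinarith
      have key : s6 * (4 + γ ^ 2) ≤ 10 * γ := by
        apply le_of_sq_le_sq'' (by positivity)
        nlinarith
      have : S ≤ 4 * (s6 * γ) - 4 - γ ^ 2 := by
        apply le_of_sq_le_sq'' (by linarith)
        nlinarith [mul_le_mul_of_nonneg_right key h0.le]
      rw [hW]; linarith
end
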